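/- arXiv:0809.0076 — 3 statements merged into one kernel-verified Lean document; each statement's English description precedes it below -/
import Mathlib

section
/- det(Ã_n) = Σ_{k=1}^{n} w(k) a(k), where Ã_n = W_n + D_n^{-1}. -/
/-- The Dirichlet matrix `D_n` attached to the coefficient sequence `a`:
its `(i,j)` entry (with `1 ≤ i, j ≤ n`, realized via `Fin n` shifted by one)
is `a (j / i)` if `i ∣ j` and `0` otherwise. -/
def Dmat (n : ℕ) (a : ℕ → ℂ) : Matrix (Fin n) (Fin n) ℂ :=
  fun i j => if (i.val + 1) ∣ (j.val + 1) then a ((j.val + 1) / (i.val + 1)) else 0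

/-- The weight matrix `W_n`: its `(i,1)` entry is `w i` for `2 ≤ i ≤ n`
and all other entries are `0`. -/
def Wmat (n : ℕ) (w : ℕ → ℂ) : Matrix (Fin n) (Fin n) ℂ :=
  fun i j => if j.val = 0 ∧ i.val ≠ 0 then w (i.val + 1) else 0

/-- `Ã_n = W_n + D_n⁻¹`. -/
noncomputable def Atilde (n : ℕ) (a w : ℕ → ℂ) : Matrix (Fin n) (Fin n) ℂ :=
  Wmat n w + (Dmat n a)⁻¹

/-! Since `D_n` is unitriangular, `det Ã_n = det (D_n Ã_n) = det (1 + D_n W_n)`. The matrix `W_n`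
has rank one, `W_n = u e₁ᵀ` with `u = (0, w 2, …, w n)`, so the matrix determinant lemma gives
`det (1 + D_n W_n) = 1 + (D_n u)₁`. As the first row of `D_n` is `(a 1, …, a n)`, this is
`1 + ∑_{k ≥ 2} a k w k`, and `a 1 w 1 = 1`. -/

open Matrix

theorem Matrix.det_vecMulVec_add_inv {m R : Type*} [Fintype m] [DecidableEq m] [CommRing R]
    {D : Matrix m m R} (hD : D.det = 1) (u v : m → R) :
    (vecMulVec u v + D⁻¹).det = 1 + v ⬝ᵥ (D *ᵥ u) :=
  calc (vecMulVec u v + D⁻¹).det = (D * (vecMulVec u v + D⁻¹)).det := by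
        rw [det_mul, hD, one_mul]
    _ = (1 + vecMulVec (D *ᵥ u) v).det := by
        rw [Matrix.mul_add, mul_nonsing_inv _ (hD ▸ isUnit_one), mul_vecMulVec, add_comm]
    _ = 1 + v ⬝ᵥ (D *ᵥ u) := by
        rw [vecMulVec_eq Unit, det_one_add_replicateCol_mul_replicateRow]

theorem Dmat_isUpperTriangular (n : ℕ) (a : ℕ → ℂ) : (Dmat n a).IsUpperTriangular := by
  intro i j hji
  have hij : j.val + 1 < i.val + 1 := Nat.succ_lt_succ hji
  simp only [Dmat, if_neg fun hdvd => (Nat.le_of_dvd j.val.succ_pos hdvd).not_gt hij]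

theorem det_Dmat (n : ℕ) {a : ℕ → ℂ} (ha : a 1 = 1) : (Dmat n a).det = 1 := by
  rw [det_of_isUpperTriangular (Dmat_isUpperTriangular n a)]
  exact Finset.prod_eq_one fun i _ => by simp [Dmat, ha]

theorem Dmat_zero_apply (n : ℕ) (a : ℕ → ℂ) (j : Fin (n + 1)) :
    Dmat (n + 1) a 0 j = a (j + 1) := by
  simp [Dmat]

theorem Wmat_succ_eq_vecMulVec (n : ℕ) (w : ℕ → ℂ) :
    Wmat (n + 1) w =
      vecMulVec (fun i : Fin (n + 1) => if i = 0 then 0 else w (i + 1)) (Pi.single 0 1) := by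
  ext i j
  by_cases hi : i = 0 <;> by_cases hj : j = 0 <;> simp [Wmat, vecMulVec_apply, hi, hj]

theorem Finset.sum_Icc_one_eq_sum_fin {M : Type*} [AddCommMonoid M] (n : ℕ) (f : ℕ → M) :
    ∑ k ∈ Finset.Icc 1 n, f k = ∑ i : Fin n, f (i + 1) := by
  rw [Fin.sum_univ_eq_sum_range (fun i => f (i + 1)), Finset.range_eq_Ico, Finset.sum_Ico_add' f]
  rfl

/-- `det Ã_n = ∑_{k=1}^{n} w k * a k`, where `Ã_n = W_n + D_n⁻¹`. -/
theorem det_Atilde (n : ℕ) (hn : 1 ≤ n) (a w : ℕ → ℂ) (ha : a 1 = 1) (hw : w 1 = 1) :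
    (Atilde n a w).det = ∑ k ∈ Finset.Icc 1 n, w k * a k := by
  obtain ⟨n, rfl⟩ : ∃ m, n = m + 1 := ⟨n - 1, by omega⟩
  rw [Atilde, Wmat_succ_eq_vecMulVec, det_vecMulVec_add_inv (det_Dmat _ ha), single_one_dotProduct,
    Finset.sum_Icc_one_eq_sum_fin, Fin.sum_univ_succ, mulVec, dotProduct, Fin.sum_univ_succ]
  simp [Dmat_zero_apply, Fin.succ_ne_zero, ha, hw, mul_comm]
end

section
/- If v(n,r) ≠ 0, where r = ⌊log₂ n⌋, then the algebraic multiplicity of the eigenvalue 1 of A_n is exactly n − r − 1; that is, (x−1)^{n−r−1} divides the characteristic polynomial of A_n but (x−1)^{n−r} does not. -/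
/-- `A_n = W_n + D_n`. -/
def Amat (n : ℕ) (a w : ℕ → ℂ) : Matrix (Fin n) (Fin n) ℂ :=
  Wmat n w + Dmat n a

/-- `dcoef a m k`: the sum of `∏ a ℓᵢ` over `k`-tuples of integers `ℓᵢ ≥ 2`
with product `m`. -/
noncomputable def dcoef (a : ℕ → ℂ) (m k : ℕ) : ℂ :=
  ∑ t ∈ (Fintype.piFinset fun _ : Fin k => Finset.Icc 2 m).filter
      (fun t => ∏ i, t i = m), ∏ i, a (t i)

/-- `vcoef a w m k = ∑_{j=1}^{m} w j * d(j,k)`. -/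
noncomputable def vcoef (a w : ℕ → ℂ) (m k : ℕ) : ℂ :=
  ∑ j ∈ Finset.Icc 1 m, w j * dcoef a j k

/-! Since `a 1 = 1`, `A_n - 1 = N + u e₀ᵀ`, where `N` is the strictly upper triangular matrix of
the coefficients `a ℓ` with `ℓ ≥ 2` and `u` is the first column of `W_n`. As `N` is nilpotent,
`adj (X - N) = Σᵢ Xⁱ N^(n-1-i)`, and the matrix determinant lemma gives
`charpoly (A_n - 1) = Xⁿ - Σₖ (N^k u)₀ X^(n-1-k)`. Row `0` of `N^k` is Dirichlet convolution, so
`(N^k u)₀ = v(n,k)` for `k ≥ 1`; this vanishes once `2^k > n`, since `d(m,k) = 0` for `m < 2^k`.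
So the lowest nonzero coefficient of `charpoly (A_n - 1)` is `-v(n,r)` at `X^(n-r-1)`, and
shifting `X ↦ X - 1` turns this into the multiplicity of the eigenvalue `1` of `A_n`. -/

open Polynomial Matrix Finset

theorem Finset.sum_piFinset_const_succ {α M : Type*} [DecidableEq α] [AddCommMonoid M]
    (S : Finset α) (k : ℕ) (F : (Fin (k + 1) → α) → M) :
    ∑ t ∈ Fintype.piFinset (fun _ => S), F t =
      ∑ y ∈ S, ∑ s ∈ Fintype.piFinset (fun _ : Fin k => S), F (Fin.snoc s y) := by
  have h := filter_piFinset_eq_map_snocEquiv (fun _ : Fin (k + 1) => S) (fun _ => True)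
  simp only [filter_true] at h
  rw [h, sum_map, sum_product]
  rfl

theorem Polynomial.X_pow_dvd_X_pow_sub_sum_iff {R : Type*} [CommRing R] {m n : ℕ} (hmn : m ≤ n)
    (b : ℕ → R) : X ^ m ∣ X ^ n - ∑ i ∈ range n, C (b i) * X ^ i ↔ ∀ i < m, b i = 0 := by
  rw [X_pow_dvd_iff]
  refine forall₂_congr fun i hi => ?_
  simp [coeff_X_pow, show i ≠ n by omega, show i < n by omega]

section Charpoly

variable {R ι : Type*} [CommRing R] [Fintype ι] [DecidableEq ι]

theorem Matrix.X_sub_C_pow_dvd_charpoly_iff (M : Matrix ι ι R) (μ : R) (m : ℕ) :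
    (X - C μ) ^ m ∣ M.charpoly ↔ X ^ m ∣ (M - scalar ι μ).charpoly := by
  have hX : taylor μ ((X - C μ) ^ m) = X ^ m := by simp [taylor_apply, sub_comp]
  rw [charpoly_sub_scalar, ← taylor_apply, ← hX]
  exact (map_dvd_iff (taylorEquiv μ)).symm

theorem Matrix.det_sub_vecMulVec_single (A : Matrix ι ι R) (u : ι → R) (j : ι) :
    (A - vecMulVec u (Pi.single j 1)).det = A.det - (adjugate A *ᵥ u) j := by
  have hcol : A - vecMulVec u (Pi.single j 1) = A.updateCol j ((fun i => A i j) + -u) := by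
    ext i k
    by_cases hk : k = j
    · subst hk; simp [vecMulVec_apply, sub_eq_add_neg]
    · simp [vecMulVec_apply, hk]
  rw [hcol, det_updateCol_add, updateCol_eq_self, ← cramer_apply, map_neg,
    cramer_eq_adjugate_mulVec, Pi.neg_apply, sub_eq_add_neg]

variable [IsDomain R]

theorem Matrix.adjugate_charmatrix_of_charpoly_eq_X_pow {N : Matrix ι ι R}
    (hN : N.charpoly = X ^ Fintype.card ι) :
    adjugate (charmatrix N) =
      ∑ i ∈ range (Fintype.card ι), (X : R[X]) ^ i • (N ^ (Fintype.card ι - 1 - i)).map C := by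
  set n := Fintype.card ι
  set S := ∑ i ∈ range n, (X : R[X]) ^ i • (N ^ (n - 1 - i)).map C
  have hNn : N ^ n = 0 := by
    have := aeval_self_charpoly N
    rwa [hN, map_pow, aeval_X] at this
  -- `S` is the geometric series of `Xⁿ (X - N)⁻¹`, which terminates since `Nⁿ = 0`.
  have hS : S * charmatrix N = (X : R[X]) ^ n • (1 : Matrix ι ι R[X]) := by
    have hcomm : Commute (scalar ι (X : R[X])) (N.map C) :=
      scalar_commute _ (fun _ => Commute.all _ _) _
    have := hcomm.geom_sum₂_mul n
    simp only [← map_pow, ← Matrix.map_pow, hNn, Matrix.map_zero _ (map_zero C), sub_zero] at this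
    simpa [S, charmatrix, scalar_apply, ← smul_eq_diagonal_mul, smul_one_eq_diagonal] using this
  have hadj : charmatrix N * adjugate (charmatrix N) = (X : R[X]) ^ n • (1 : Matrix ι ι R[X]) := by
    rw [mul_adjugate, ← charpoly, hN]
  have hsmul : (X : R[X]) ^ n • S = (X : R[X]) ^ n • adjugate (charmatrix N) := by
    calc (X : R[X]) ^ n • S = S * (charmatrix N * adjugate (charmatrix N)) := by
          rw [hadj, Matrix.mul_smul, Matrix.mul_one]
      _ = (X : R[X]) ^ n • adjugate (charmatrix N) := by
          rw [← Matrix.mul_assoc, hS, Matrix.smul_mul, Matrix.one_mul]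
  refine Matrix.ext fun i j => ?_
  exact mul_left_cancel₀ (pow_ne_zero n X_ne_zero) (congrFun (congrFun hsmul i) j).symm

theorem Matrix.charpoly_add_vecMulVec_single {N : Matrix ι ι R}
    (hN : N.charpoly = X ^ Fintype.card ι) (u : ι → R) (j : ι) :
    (N + vecMulVec u (Pi.single j 1)).charpoly =
      X ^ Fintype.card ι -
        ∑ i ∈ range (Fintype.card ι), C ((N ^ (Fintype.card ι - 1 - i) *ᵥ u) j) * X ^ i := by
  have hcm : charmatrix (N + vecMulVec u (Pi.single j 1)) =
      charmatrix N - vecMulVec (C ∘ u) (Pi.single j 1) := by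
    rw [charmatrix, charmatrix, map_add, sub_add_eq_sub_sub]
    congr 1
    ext i k
    simp [vecMulVec_apply, Pi.single_apply, apply_ite C]
  rw [charpoly, hcm, det_sub_vecMulVec_single, ← charpoly, hN,
    adjugate_charmatrix_of_charpoly_eq_X_pow hN]
  simp [Matrix.sum_mulVec, Matrix.smul_mulVec, RingHom.map_mulVec, mul_comm]

end Charpoly

def dirichletMatrix {R : Type*} [Zero R] (n : ℕ) (f : ArithmeticFunction R) :
    Matrix (Fin n) (Fin n) R :=
  Matrix.of fun i j => if (i : ℕ) + 1 ∣ (j : ℕ) + 1 then f (((j : ℕ) + 1) / ((i : ℕ) + 1)) else 0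

section DirichletMatrix

variable {R : Type*} {n : ℕ}

theorem sum_mul_dirichletMatrix [Semiring R] (g f : ArithmeticFunction R) (j : Fin n) :
    ∑ i : Fin n, g ((i : ℕ) + 1) * dirichletMatrix n f i j = (g * f) ((j : ℕ) + 1) := by
  set m := (j : ℕ) + 1
  have hdiv : {e ∈ range (n + 1) | e ∣ m} = m.divisors := by
    ext e
    simp only [mem_filter, mem_range, Nat.mem_divisors]
    constructor
    · rintro ⟨-, he⟩; exact ⟨he, by omega⟩
    · rintro ⟨he, -⟩; exact ⟨by have := Nat.le_of_dvd (by omega) he; omega, he⟩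
  let F : ℕ → R := fun e => if e ∣ m then g e * f (m / e) else 0
  calc ∑ i : Fin n, g ((i : ℕ) + 1) * dirichletMatrix n f i j
      = ∑ i ∈ range n, F (i + 1) := by
        rw [← Fin.sum_univ_eq_sum_range (fun i => F (i + 1))]
        simp [F, dirichletMatrix, m, mul_ite]
    _ = ∑ e ∈ range (n + 1), F e := by simp [sum_range_succ', F, m]
    _ = ∑ e ∈ m.divisors, g e * f (m / e) := by rw [← hdiv, sum_filter]
    _ = (g * f) m := by
        rw [ArithmeticFunction.mul_apply, Nat.sum_divisorsAntidiagonal (fun x y => g x * f y)]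

theorem dirichletMatrix_pow_apply_zero [Semiring R] [NeZero n] (f : ArithmeticFunction R) (k : ℕ)
    (j : Fin n) : (dirichletMatrix n f ^ k) 0 j = (f ^ k) ((j : ℕ) + 1) := by
  induction k generalizing j with
  | zero =>
    rw [pow_zero, pow_zero, Matrix.one_apply, ArithmeticFunction.one_apply]
    exact if_congr (by rw [Fin.ext_iff, Fin.val_zero]; omega) rfl rfl
  | succ k ih => simp only [pow_succ, Matrix.mul_apply, ih, sum_mul_dirichletMatrix]

theorem charpoly_dirichletMatrix [CommRing R] (f : ArithmeticFunction R) (hf : f 1 = 0) :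
    (dirichletMatrix n f).charpoly = X ^ n := by
  have hupper : (dirichletMatrix n f).IsUpperTriangular := by
    intro i j hji
    have : ¬ (i : ℕ) + 1 ∣ (j : ℕ) + 1 := fun h => by
      have := Nat.le_of_dvd (by omega) h; change j < i at hji; rw [Fin.lt_def] at hji; omega
    simp [dirichletMatrix, this]
  rw [charpoly_of_isUpperTriangular _ hupper]
  simp [dirichletMatrix, hf]

end DirichletMatrix

def geTwoPart {R : Type*} [Zero R] (a : ℕ → R) : ArithmeticFunction R :=
  ⟨fun m => if 2 ≤ m then a m else 0, rfl⟩

theorem geTwoPart_apply {R : Type*} [Zero R] (a : ℕ → R) (m : ℕ) :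
    geTwoPart a m = if 2 ≤ m then a m else 0 := rfl

section Dcoef

variable (a : ℕ → ℂ)

theorem dcoef_eq_zero_of_lt {m k : ℕ} (h : m < 2 ^ k) : dcoef a m k = 0 := by
  refine sum_eq_zero fun t ht => absurd ?_ h.not_ge
  rw [mem_filter, Fintype.mem_piFinset] at ht
  calc 2 ^ k = ∏ _i : Fin k, 2 := by simp
    _ ≤ ∏ i, t i := prod_le_prod' fun i _ => (mem_Icc.1 (ht.1 i)).1
    _ = m := ht.2

theorem dcoef_eq_sum_of_le {m M : ℕ} (k : ℕ) (hmM : m ≤ M) :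
    dcoef a m k = ∑ t ∈ (Fintype.piFinset fun _ : Fin k => Icc 2 M) with ∏ i, t i = m,
      ∏ i, a (t i) := by
  refine sum_subset (filter_subset_filter _ (Fintype.piFinset_subset _ _ fun _ =>
    Icc_subset_Icc le_rfl hmM)) fun t ht hnot => absurd ?_ hnot
  rw [mem_filter, Fintype.mem_piFinset] at ht ⊢
  have hm : m ≠ 0 := ht.2 ▸ prod_ne_zero_iff.2 fun i _ => by have := (mem_Icc.1 (ht.1 i)).1; omega
  refine ⟨fun i => mem_Icc.2 ⟨(mem_Icc.1 (ht.1 i)).1, Nat.le_of_dvd (by omega) ?_⟩, ht.2⟩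
  exact ht.2 ▸ dvd_prod_of_mem _ (mem_univ i)

theorem dcoef_succ (m k : ℕ) :
    dcoef a m (k + 1) = ∑ x ∈ m.divisorsAntidiagonal, dcoef a x.1 k * geTwoPart a x.2 := by
  have hfactor : ∀ y ∈ Icc 2 m,
      ∑ s ∈ Fintype.piFinset (fun _ : Fin k => Icc 2 m),
        (if (∏ i, s i) * y = m then (∏ i, a (s i)) * a y else 0) =
      if y ∣ m then dcoef a (m / y) k * a y else 0 := by
    intro y hy2
    have hy0 : y ≠ 0 := by have := (mem_Icc.1 hy2).1; omega
    split_ifs with hy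
    · rw [dcoef_eq_sum_of_le a k (Nat.div_le_self m y), sum_filter, sum_mul]
      refine sum_congr rfl fun s _ => ?_
      rw [ite_mul, zero_mul]
      exact if_congr (eq_comm.trans (Nat.eq_div_iff_mul_eq_left hy0 hy).symm) rfl rfl
    · exact sum_eq_zero fun s _ => if_neg fun h : (∏ i, s i) * y = m => hy (h ▸ dvd_mul_left y _)
  have hdiv : {y ∈ Icc 2 m | y ∣ m} = {y ∈ m.divisors | 2 ≤ y} := by
    ext y
    simp only [mem_filter, mem_Icc, Nat.mem_divisors]
    constructor
    · rintro ⟨⟨h2, hm⟩, hy⟩; exact ⟨⟨hy, by omega⟩, h2⟩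
    · rintro ⟨⟨hy, hm⟩, h2⟩; exact ⟨⟨h2, Nat.le_of_dvd (by omega) hy⟩, hy⟩
  rw [Nat.sum_divisorsAntidiagonal' (fun x y => dcoef a x k * geTwoPart a y), dcoef, sum_filter,
    sum_piFinset_const_succ]
  simp only [Fin.prod_univ_castSucc, Fin.snoc_castSucc, Fin.snoc_last]
  rw [sum_congr rfl hfactor, ← sum_filter, hdiv, sum_filter]
  simp [geTwoPart_apply, mul_ite]

theorem dcoef_eq_pow_apply (m k : ℕ) : dcoef a m k = (geTwoPart a ^ k) m := by
  induction k generalizing m with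
  | zero => rcases eq_or_ne m 1 with rfl | hm <;> simp [dcoef, *, Ne.symm]
  | succ k ih => simp only [dcoef_succ, ih, pow_succ, ArithmeticFunction.mul_apply]

end Dcoef

section Amat

variable {n : ℕ} (a w : ℕ → ℂ)

theorem Dmat_sub_one (ha : a 1 = 1) : Dmat n a - 1 = dirichletMatrix n (geTwoPart a) := by
  ext i j
  by_cases hij : i = j
  · subst hij; simp [Dmat, dirichletMatrix, geTwoPart_apply, ha]
  · have hq : (i : ℕ) + 1 ∣ (j : ℕ) + 1 → 2 ≤ ((j : ℕ) + 1) / ((i : ℕ) + 1) := by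
      rintro ⟨q, hq⟩
      rw [hq, Nat.mul_div_cancel_left _ (by omega)]
      rcases q with _ | _ | q
      · omega
      · exact absurd (Fin.ext (by omega)) hij
      · omega
    by_cases hd : (i : ℕ) + 1 ∣ (j : ℕ) + 1 <;>
      simp [Dmat, dirichletMatrix, geTwoPart_apply, one_apply_ne hij, hd, hq]

theorem Wmat_eq_vecMulVec [NeZero n] :
    Wmat n w = vecMulVec (fun i => Wmat n w i 0) (Pi.single 0 1) := by
  ext i j
  by_cases hj : j = 0
  · simp [vecMulVec_apply, hj]
  · simp [vecMulVec_apply, Wmat, hj]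

theorem vcoef_eq_sum_fin (k : ℕ) :
    vcoef a w n k = ∑ j : Fin n, w ((j : ℕ) + 1) * dcoef a ((j : ℕ) + 1) k := by
  rw [vcoef, Fin.sum_univ_eq_sum_range (fun j => w (j + 1) * dcoef a (j + 1) k), range_eq_Ico,
    sum_Ico_add' (fun j => w j * dcoef a j k), zero_add, Ico_add_one_right_eq_Icc]

theorem vcoef_eq_zero_of_lt {k : ℕ} (h : n < 2 ^ k) : vcoef a w n k = 0 :=
  sum_eq_zero fun j hj => by rw [dcoef_eq_zero_of_lt a ((mem_Icc.1 hj).2.trans_lt h), mul_zero]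

theorem dirichletMatrix_pow_mulVec_Wmat_col [NeZero n] {k : ℕ} (hk : 1 ≤ k) :
    (dirichletMatrix n (geTwoPart a) ^ k *ᵥ fun i => Wmat n w i 0) 0 = vcoef a w n k := by
  rw [vcoef_eq_sum_fin, mulVec, dotProduct]
  refine sum_congr rfl fun j _ => ?_
  rw [dirichletMatrix_pow_apply_zero, ← dcoef_eq_pow_apply]
  by_cases hj : (j : ℕ) = 0
  · rw [hj, dcoef_eq_zero_of_lt a (Nat.one_lt_two_pow (by omega))]; simp
  · simp [Wmat, hj, mul_comm]

end Amat

open Polynomial in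
theorem algebraic_multiplicity_one_general (n : ℕ) (hn : 2 ≤ n) (a w : ℕ → ℂ) (ha : a 1 = 1)
    (hv : vcoef a w n (Nat.log 2 n) ≠ 0) :
    (X - 1) ^ (n - Nat.log 2 n - 1) ∣ (Amat n a w).charpoly ∧
    ¬ (X - 1) ^ (n - Nat.log 2 n) ∣ (Amat n a w).charpoly := by
  have : NeZero n := ⟨by omega⟩
  set r := Nat.log 2 n
  have hr : 1 ≤ r := Nat.log_pos (by norm_num) hn
  have hrn : r < n := Nat.log_lt_self 2 (by omega)
  have hnr : n < 2 ^ (r + 1) := Nat.lt_pow_succ_log_self (by norm_num) n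
  set N := dirichletMatrix n (geTwoPart a)
  set u : Fin n → ℂ := fun i => Wmat n w i 0
  have hA : Amat n a w - scalar (Fin n) 1 = N + vecMulVec u (Pi.single 0 1) := by
    rw [map_one, Amat, add_sub_assoc, Dmat_sub_one a ha, Wmat_eq_vecMulVec, add_comm]
  have hN : N.charpoly = X ^ Fintype.card (Fin n) := by
    rw [Fintype.card_fin]; exact charpoly_dirichletMatrix _ rfl
  have hdvd : ∀ m ≤ n, (X - 1 : ℂ[X]) ^ m ∣ (Amat n a w).charpoly ↔
      ∀ i < m, (N ^ (n - 1 - i) *ᵥ u) 0 = 0 := by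
    intro m hm
    rw [← C_1, X_sub_C_pow_dvd_charpoly_iff, hA, charpoly_add_vecMulVec_single hN, Fintype.card_fin,
      X_pow_dvd_X_pow_sub_sum_iff hm]
  rw [hdvd _ (by omega), hdvd _ (by omega)]
  refine ⟨fun i hi => ?_, fun h => hv ?_⟩
  · rw [dirichletMatrix_pow_mulVec_Wmat_col a w (by omega), vcoef_eq_zero_of_lt a w
      (hnr.trans_le (Nat.pow_le_pow_right (by norm_num) (by omega)))]
  · have := h (n - r - 1) (by omega)
    rwa [show n - 1 - (n - r - 1) = r by omega, dirichletMatrix_pow_mulVec_Wmat_col a w hr] at this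

open Polynomial in
/-- If `v(n,r) ≠ 0` with `r = ⌊log₂ n⌋`, then the algebraic multiplicity of the
eigenvalue `1` of `A_n` is exactly `n - r - 1`: `(x-1)^{n-r-1}` divides the
characteristic polynomial of `A_n` but `(x-1)^{n-r}` does not. -/
theorem algebraic_multiplicity_one (n : ℕ) (hn : 2 ≤ n) (a w : ℕ → ℂ) (ha : a 1 = 1)
    (hw : w 1 = 1) (hv : vcoef a w n (Nat.log 2 n) ≠ 0) :
    (X - 1) ^ (n - Nat.log 2 n - 1) ∣ (Amat n a w).charpoly ∧
    ¬ (X - 1) ^ (n - Nat.log 2 n) ∣ (Amat n a w).charpoly :=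
  algebraic_multiplicity_one_general n hn a w ha hv
end

section
/- The polynomials t_k(x) = Σ_{j ≥ 0} d(k,j)(x−1)^{k−j−1} satisfy t_1(x) = 1 and, for every k > 1, t_k(x) = Σ_{ℓ ∣ k, ℓ < k} a(k/ℓ) (x−1)^{k−ℓ−1} t_ℓ(x). -/
open Polynomial in
/-- `t_k(x) = ∑_{j ≥ 0} d(k,j) (x-1)^{k-j-1}`.  Since `d(k,j) = 0` for `j ≥ k`
(indeed for all `j > log₂ k`), the sum may be truncated at `j = k - 1`. -/
noncomputable def tpoly (a : ℕ → ℂ) (k : ℕ) : Polynomial ℂ :=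
  ∑ j ∈ Finset.range k, C (dcoef a k j) * (X - 1) ^ (k - j - 1)

/-!
Splitting an ordered factorization `ℓ₁ ⋯ ℓ_{j+1} = k` (all `ℓᵢ ≥ 2`) into its first factor and the
factorization `ℓ₂ ⋯ ℓ_{j+1} = l` of the proper divisor `l = k / ℓ₁` gives
`d(k, j+1) = ∑_{l ∣ k, l < k} a(k/l) d(l, j)`. Since `d(k, 0) = 0` for `k > 1` and `d(l, j) = 0`
for `j ≥ l`, summing this against `(x-1)^{k-j-2}` over `j < k - 1` yields the recurrence.
-/

open Finset

def orderedFactorizations (k m : ℕ) : Finset (Fin k → ℕ) :=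
  (Fintype.piFinset fun _ : Fin k => Icc 2 m).filter (fun t => ∏ i, t i = m)

theorem dcoef_eq_sum_orderedFactorizations (a : ℕ → ℂ) (m k : ℕ) :
    dcoef a m k = ∑ t ∈ orderedFactorizations k m, ∏ i, a (t i) :=
  rfl

theorem two_pow_le_prod {k : ℕ} {t : Fin k → ℕ} (ht : ∀ i, 2 ≤ t i) : 2 ^ k ≤ ∏ i, t i := by
  simpa using pow_card_le_prod univ t 2 fun i _ => ht i

theorem mem_orderedFactorizations {k m : ℕ} {t : Fin k → ℕ} :
    t ∈ orderedFactorizations k m ↔ (∀ i, 2 ≤ t i) ∧ ∏ i, t i = m := by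
  simp only [orderedFactorizations, mem_filter, Fintype.mem_piFinset, mem_Icc]
  refine ⟨fun ⟨hbd, hprod⟩ => ⟨fun i => (hbd i).1, hprod⟩,
    fun ⟨hge, hprod⟩ => ⟨fun i => ⟨hge i, ?_⟩, hprod⟩⟩
  have hm : 0 < m := hprod ▸ (Nat.two_pow_pos k).trans_le (two_pow_le_prod hge)
  exact Nat.le_of_dvd hm (hprod ▸ dvd_prod_of_mem _ (mem_univ i))

theorem dcoef_eq_zero_of_lt_two_pow (a : ℕ → ℂ) {m k : ℕ} (hm : m < 2 ^ k) : dcoef a m k = 0 := by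
  refine sum_eq_zero fun t ht => absurd hm ?_
  obtain ⟨hge, rfl⟩ := mem_orderedFactorizations.mp ht
  exact not_lt.mpr (two_pow_le_prod hge)

theorem dcoef_eq_zero_of_le (a : ℕ → ℂ) {m k : ℕ} (hm : m ≤ k) : dcoef a m k = 0 :=
  dcoef_eq_zero_of_lt_two_pow a (hm.trans_lt k.lt_two_pow_self)

theorem dcoef_zero_right (a : ℕ → ℂ) (m : ℕ) : dcoef a m 0 = if m = 1 then 1 else 0 := by
  by_cases hm : m = 1 <;> simp [dcoef, hm, eq_comm]

theorem mem_orderedFactorizations_succ {j m : ℕ} {t : Fin (j + 1) → ℕ} :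
    t ∈ orderedFactorizations (j + 1) m ↔
      ∏ i, Fin.tail t i ∈ m.properDivisors ∧
        Fin.tail t ∈ orderedFactorizations j (∏ i, Fin.tail t i) ∧ t 0 = m / ∏ i, Fin.tail t i := by
  rw [mem_orderedFactorizations, mem_orderedFactorizations, Fin.forall_fin_succ, Fin.prod_univ_succ]
  change (2 ≤ t 0 ∧ ∀ i, 2 ≤ Fin.tail t i) ∧ t 0 * ∏ i, Fin.tail t i = m ↔ _
  constructor
  · rintro ⟨⟨hhead, htail⟩, hprod⟩
    have hpos : 0 < ∏ i, Fin.tail t i := (Nat.two_pow_pos j).trans_le (two_pow_le_prod htail)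
    refine ⟨Nat.mem_properDivisors.mpr ⟨Dvd.intro_left _ hprod, hprod ▸ ?_⟩, ⟨htail, rfl⟩, ?_⟩
    · exact lt_mul_left hpos hhead
    · rw [← hprod, Nat.mul_div_cancel _ hpos]
  · rintro ⟨hl, ⟨htail, -⟩, hhead⟩
    refine ⟨⟨hhead ▸ Nat.one_lt_div_of_mem_properDivisors hl, htail⟩, ?_⟩
    rw [hhead]
    exact Nat.div_mul_cancel (Nat.mem_properDivisors.mp hl).1

theorem dcoef_succ_s10 (a : ℕ → ℂ) (m j : ℕ) :
    dcoef a m (j + 1) = ∑ l ∈ m.properDivisors, a (m / l) * dcoef a l j := by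
  simp only [dcoef_eq_sum_orderedFactorizations, mul_sum]
  rw [sum_sigma']
  refine sum_nbij' (fun t => ⟨∏ i, Fin.tail t i, Fin.tail t⟩) (fun p => Fin.cons (m / p.1) p.2)
    ?_ ?_ ?_ ?_ ?_
  · intro t ht
    obtain ⟨hl, hs, -⟩ := mem_orderedFactorizations_succ.mp ht
    exact mem_sigma.mpr ⟨hl, hs⟩
  · intro p hp
    obtain ⟨hl, hs⟩ := mem_sigma.mp hp
    rw [mem_orderedFactorizations_succ, Fin.tail_cons, (mem_orderedFactorizations.mp hs).2,
      Fin.cons_zero]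
    exact ⟨hl, hs, rfl⟩
  · intro t ht
    simp only [← (mem_orderedFactorizations_succ.mp ht).2.2, Fin.cons_self_tail]
  · intro p hp
    rw [Fin.tail_cons, (mem_orderedFactorizations.mp (mem_sigma.mp hp).2).2]
  · intro t ht
    rw [Fin.prod_univ_succ, (mem_orderedFactorizations_succ.mp ht).2.2]
    rfl

section

open Polynomial

theorem tpoly_eq_sum_dcoef_succ (a : ℕ → ℂ) {k : ℕ} (hk : 1 < k) :
    tpoly a k = ∑ j ∈ range (k - 1), C (dcoef a k (j + 1)) * (X - 1) ^ (k - j - 2) := by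
  obtain ⟨n, rfl⟩ : ∃ n, k = n + 1 := ⟨k - 1, by omega⟩
  rw [tpoly, sum_range_succ', dcoef_zero_right, if_neg hk.ne', map_zero, zero_mul, add_zero]
  exact sum_congr rfl fun j _ => by rw [show n + 1 - (j + 1) - 1 = n + 1 - j - 2 by omega]

theorem pow_mul_tpoly (a : ℕ → ℂ) {k l : ℕ} (hlk : l < k) :
    (X - 1) ^ (k - l - 1) * tpoly a l =
      ∑ j ∈ range (k - 1), C (dcoef a l j) * (X - 1) ^ (k - j - 2) := by
  rw [tpoly, mul_sum,
    sum_subset (range_subset_range.mpr (show l ≤ k - 1 by omega)) fun j _ hj => ?_]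
  · refine sum_congr rfl fun j hj => ?_
    by_cases hjl : j < l
    · rw [mul_left_comm, ← pow_add, show k - l - 1 + (l - j - 1) = k - j - 2 by omega]
    · rw [dcoef_eq_zero_of_le a (not_lt.mp hjl), map_zero, zero_mul, zero_mul, mul_zero]
  · rw [dcoef_eq_zero_of_le a (not_lt.mp (mem_range.not.mp hj)), map_zero, zero_mul, mul_zero]

end

open Polynomial in
theorem tpoly_recurrence_general (a : ℕ → ℂ) :
    tpoly a 1 = 1 ∧
    ∀ k : ℕ, 1 < k →
      tpoly a k = ∑ l ∈ k.properDivisors, C (a (k / l)) * (X - 1) ^ (k - l - 1) * tpoly a l := by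
  refine ⟨by simp [tpoly, dcoef_zero_right], fun k hk => ?_⟩
  calc tpoly a k
      = ∑ j ∈ range (k - 1), ∑ l ∈ k.properDivisors,
          C (a (k / l)) * (C (dcoef a l j) * (X - 1) ^ (k - j - 2)) := by
        simp only [tpoly_eq_sum_dcoef_succ a hk, dcoef_succ_s10, map_sum, map_mul, sum_mul, mul_assoc]
    _ = ∑ l ∈ k.properDivisors, C (a (k / l)) * ((X - 1) ^ (k - l - 1) * tpoly a l) := by
        rw [sum_comm]
        refine sum_congr rfl fun l hl => ?_
        rw [pow_mul_tpoly a (Nat.mem_properDivisors.mp hl).2, mul_sum]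
    _ = _ := by simp only [mul_assoc]

open Polynomial in
/-- `t_1(x) = 1` and, for every `k > 1`,
`t_k(x) = ∑_{ℓ ∣ k, ℓ < k} a(k/ℓ) (x-1)^{k-ℓ-1} t_ℓ(x)`. -/
theorem tpoly_recurrence (a : ℕ → ℂ) (ha : a 1 = 1) :
    tpoly a 1 = 1 ∧
    ∀ k : ℕ, 1 < k →
      tpoly a k = ∑ l ∈ k.properDivisors, C (a (k / l)) * (X - 1) ^ (k - l - 1) * tpoly a l :=
  tpoly_recurrence_general a
end
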